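/- (Csorba's theorem) Let H be a graph and let G be obtained from H by subdividing one edge into a path of four edges (i.e., replacing edge uv by a path u – a – b – c – v with three new vertices). Then I_G is homotopy equivalent to the suspension Σ I_H. -/

import Mathlib

open scoped unitInterval

/-- The defining relation for the topological join of two spaces. -/
inductive JoinRel (X Y : Type*) :
    (X × Y × I) ⊕ (X ⊕ Y) → (X × Y × I) ⊕ (X ⊕ Y) → Prop
  | zero (x : X) (y : Y) : JoinRel X Y (.inl (x, y, 0)) (.inr (.inl x))
  | one (x : X) (y : Y) : JoinRel X Y (.inl (x, y, 1)) (.inr (.inr y))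

/-- The topological join `X * Y`. -/
def TopJoin (X Y : Type*) [TopologicalSpace X] [TopologicalSpace Y] : Type _ :=
  Quot (JoinRel X Y)

instance (X Y : Type*) [TopologicalSpace X] [TopologicalSpace Y] :
    TopologicalSpace (TopJoin X Y) := by
  unfold TopJoin; infer_instance

/-- The inclusion of the first factor into the join. -/
def TopJoin.inl {X Y : Type*} [TopologicalSpace X] [TopologicalSpace Y] (x : X) :
    TopJoin X Y :=
  Quot.mk _ (.inr (.inl x))

/-- The (unreduced) suspension, as the join with a two-point space. -/
def Susp (X : Type*) [TopologicalSpace X] : Type _ := TopJoin X Bool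

instance (X : Type*) [TopologicalSpace X] : TopologicalSpace (Susp X) :=
  inferInstanceAs (TopologicalSpace (TopJoin X Bool))

/-- The north pole of the suspension. -/
def suspApex (X : Type*) [TopologicalSpace X] : Susp X :=
  Quot.mk _ (.inr (.inr true))

/-- The wedge (one-point union) of two pointed spaces. -/
def Wedge (X Y : Type*) [TopologicalSpace X] [TopologicalSpace Y] (x0 : X) (y0 : Y) :
    Type _ :=
  Quot (fun a b : X ⊕ Y => a = Sum.inl x0 ∧ b = Sum.inr y0)

instance (X Y : Type*) [TopologicalSpace X] [TopologicalSpace Y] (x0 : X) (y0 : Y) :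
    TopologicalSpace (Wedge X Y x0 y0) := by
  unfold Wedge; infer_instance

/-- The wedge of a family of pointed spaces. -/
def WedgeFam {ι : Type*} (X : ι → Type*) [∀ i, TopologicalSpace (X i)]
    (pt : ∀ i, X i) : Type _ :=
  Quot (fun a b : Σ i, X i => ∃ i j, a = ⟨i, pt i⟩ ∧ b = ⟨j, pt j⟩)

instance {ι : Type*} (X : ι → Type*) [∀ i, TopologicalSpace (X i)] (pt : ∀ i, X i) :
    TopologicalSpace (WedgeFam X pt) := by
  unfold WedgeFam; infer_instance

/-- The `k`-dimensional sphere. -/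
abbrev nSphere (k : ℕ) : Type :=
  ↥(Metric.sphere (0 : EuclideanSpace ℝ (Fin (k + 1))) 1)

/-- A base point on the `k`-sphere. -/
noncomputable def sphereBase (k : ℕ) : nSphere k :=
  ⟨EuclideanSpace.single 0 1, by
    simp [EuclideanSpace.norm_single]⟩

/-- An abstract simplicial complex on a vertex set `V`. -/
structure AbsSimplicialComplex (V : Type*) where
  faces : Set (Finset V)
  down_closed : ∀ ⦃s⦄, s ∈ faces → ∀ ⦃t : Finset V⦄, t ⊆ s → t ∈ faces

/-- The geometric realization of an abstract simplicial complex, as the space of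
convex-combination weight functions supported on a face. -/
def AbsSimplicialComplex.space {V : Type*} (K : AbsSimplicialComplex V) : Type _ :=
  {f : V → ℝ // (∀ x, 0 ≤ f x) ∧
    ∃ s ∈ K.faces, (∀ x, x ∉ s → f x = 0) ∧ ∑ x ∈ s, f x = 1}

instance {V : Type*} (K : AbsSimplicialComplex V) : TopologicalSpace K.space := by
  unfold AbsSimplicialComplex.space; infer_instance

/-- The independence complex of a graph, restricted to vertices in `A`:
faces are the independent sets of `G` contained in `A`. -/
def indepComplexOn {V : Type*} (G : SimpleGraph V) (A : Set V) :
    AbsSimplicialComplex V where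
  faces := {s | ↑s ⊆ A ∧ ∀ a ∈ s, ∀ b ∈ s, ¬ G.Adj a b}
  down_closed := by
    intro s hs t ht
    exact ⟨fun x hx => hs.1 (ht hx), fun a ha b hb => hs.2 a (ht ha) b (ht hb)⟩

/-- The independence complex of a graph. -/
def indepComplex {V : Type*} (G : SimpleGraph V) : AbsSimplicialComplex V :=
  indepComplexOn G Set.univ

/-- The closed star of a vertex: the vertex together with its neighbors. -/
def stSet {V : Type*} (G : SimpleGraph V) (v : V) : Set V :=
  insert v (G.neighborSet v)

lemma indepComplexOn_mono {V : Type*} (G : SimpleGraph V) {A B : Set V} (h : A ⊆ B) :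
    (indepComplexOn G A).faces ⊆ (indepComplexOn G B).faces :=
  fun _ hs => ⟨fun x hx => h (hs.1 hx), hs.2⟩

/-- The inclusion of the realization of a subcomplex. -/
def inclMap {V : Type*} (K L : AbsSimplicialComplex V) (h : K.faces ⊆ L.faces) :
    C(K.space, L.space) where
  toFun := fun f => ⟨f.1, f.2.1, by
    obtain ⟨s, hs, h2⟩ := f.2.2
    exact ⟨s, h hs, h2⟩⟩
  continuous_toFun := Continuous.subtype_mk continuous_subtype_val _
/-- The cone over `K` with apex `v`, inside the same vertex set. -/
def coneAt {V : Type*} [DecidableEq V] (v : V) (K : AbsSimplicialComplex V) :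
    AbsSimplicialComplex V where
  faces := {s | s.erase v ∈ K.faces}
  down_closed := by
    intro s hs t ht
    exact K.down_closed hs (Finset.erase_subset_erase _ ht)

/-- The cone over `K` with a fresh apex vertex `none`. -/
def coneVertex {V : Type*} (K : AbsSimplicialComplex V) :
    AbsSimplicialComplex (Option V) where
  faces := {s | Finset.eraseNone s ∈ K.faces}
  down_closed := by
    intro s hs t ht
    refine K.down_closed hs ?_
    intro x hx
    rw [Finset.mem_eraseNone] at hx ⊢
    exact ht hx

/-- The join of two simplicial complexes on disjoint vertex sets. -/
def complexJoin {V W : Type*} (K : AbsSimplicialComplex V)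
    (L : AbsSimplicialComplex W) : AbsSimplicialComplex (V ⊕ W) where
  faces := {s | s.toLeft ∈ K.faces ∧ s.toRight ∈ L.faces}
  down_closed := by
    intro s hs t ht
    constructor
    · refine K.down_closed hs.1 ?_
      intro x hx; rw [Finset.mem_toLeft] at hx ⊢; exact ht hx
    · refine L.down_closed hs.2 ?_
      intro x hx; rw [Finset.mem_toRight] at hx ⊢; exact ht hx

/-- The disjoint union of two graphs. -/
def graphSum {V W : Type*} (G : SimpleGraph V) (H : SimpleGraph W) :
    SimpleGraph (V ⊕ W) where
  Adj a b :=
    match a, b with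
    | .inl x, .inl y => G.Adj x y
    | .inr x, .inr y => H.Adj x y
    | _, _ => False
  symm := ⟨by rintro (x | x) (y | y) h; exacts [G.adj_symm h, h.elim, h.elim, H.adj_symm h]⟩
  loopless := ⟨by rintro (x | x) h; exacts [G.irrefl h, H.irrefl h]⟩

/-- The subcomplex `A_u = I_{G - st(u)} * u` of the independence complex:
simplices `σ` with `σ ∪ {u}` independent. -/
def Afan {V : Type*} [DecidableEq V] (G : SimpleGraph V) (u : V) :
    AbsSimplicialComplex V where
  faces := {s | ∀ a ∈ insert u s, ∀ b ∈ insert u s, ¬ G.Adj a b}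
  down_closed := by
    intro s hs t ht a ha b hb
    exact hs a (Finset.insert_subset_insert u ht ha) b (Finset.insert_subset_insert u ht hb)

/-- The join of a complex with the full simplex on the vertex set `s`. -/
def joinSimplex {V : Type*} [DecidableEq V] (s : Finset V)
    (K : AbsSimplicialComplex V) : AbsSimplicialComplex V where
  faces := {t | t \ s ∈ K.faces}
  down_closed := by
    intro t ht r hr
    exact K.down_closed ht (Finset.sdiff_subset_sdiff hr (subset_refl s))

/-- The complex `K(G, v)` of Theorem 6.4: independent sets of `G - st(v)`
missing `W_u = lk(u) - v` entirely, for at least one neighbor `u` of `v`. -/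
def Kcomplex {V : Type*} (G : SimpleGraph V) (v : V) : AbsSimplicialComplex V where
  faces := {s | s ∈ (indepComplexOn G (stSet G v)ᶜ).faces ∧
      ∃ u, G.Adj v u ∧ ∀ w ∈ s, ¬ (G.Adj u w ∧ w ≠ v)}
  down_closed := by
    intro s hs t ht
    refine ⟨(indepComplexOn G (stSet G v)ᶜ).down_closed hs.1 ht, ?_⟩
    obtain ⟨u, hu, hw⟩ := hs.2
    exact ⟨u, hu, fun w hwt => hw w (ht hwt)⟩

/-- Auxiliary relation for subdividing the edge `uv` into a path of four edges
through three new vertices `0, 1, 2`. -/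
def sRel {V : Type*} (G : SimpleGraph V) (u v : V) :
    V ⊕ Fin 3 → V ⊕ Fin 3 → Prop
  | .inl x, .inl y => G.Adj x y ∧ ¬((x = u ∧ y = v) ∨ (x = v ∧ y = u))
  | .inl x, .inr i => (x = u ∧ i = 0) ∨ (x = v ∧ i = 2)
  | .inr i, .inr j => (i : ℕ) + 1 = (j : ℕ)
  | .inr _, .inl _ => False

/-- The graph obtained from `G` by replacing the edge `uv` by the path
`u - 0 - 1 - 2 - v` of four edges. -/
def subdivide4 {V : Type*} (G : SimpleGraph V) (u v : V) :
    SimpleGraph (V ⊕ Fin 3) where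
  Adj a b := sRel G u v a b ∨ sRel G u v b a
  symm := ⟨fun _ _ h => h.symm⟩
  loopless := ⟨by
    rintro (x | i) h
    · rcases h with h | h <;> exact G.irrefl h.1
    · rcases h with h | h <;> (simp only [sRel] at h; omega)⟩

lemma stSet_compl_subset {V : Type*} (G : SimpleGraph V) (v : V) :
    (stSet G v)ᶜ ⊆ ({v} : Set V)ᶜ :=
  Set.compl_subset_compl.mpr fun x hx => by
    rw [Set.mem_singleton_iff] at hx
    rw [hx]
    exact Set.mem_insert v _

/-- The inclusion of the realization of `I_{G - st(v)}` into that of `I_{G - v}`. -/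
def linkIncl {V : Type*} (G : SimpleGraph V) (v : V) :
    C((indepComplexOn G (stSet G v)ᶜ).space, (indepComplexOn G ({v} : Set V)ᶜ).space) :=
  inclMap _ _ (indepComplexOn_mono G (stSet_compl_subset G v))

/-!
Points of a realization are barycentric weight functions; `a, b, c` denote the new vertices
`Sum.inr 0, 1, 2` of the subdivided graph `G'`. The independence complex of `G ⊔ K₂` is the join
`I(G) * S⁰`, that is, the suspension of `I(G)`, so it suffices to compare `I(G')` with it.

`collapse : I(G') → I(G ⊔ K₂)` puts the weights of `a` and `c` on the pole `true` and that of `b`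
on the pole `false`. Since `u` and `v` are adjacent in `G`, it also removes `min (x u) (x v)` from both of them
and puts it on the pole of `b`; this is harmless because `u` and `v` together force `a` and `c`
to vanish. `expand` goes back, splitting the weight `τ` of the pole `true` between `a` and `c` and
moving up to `τ` of the weight of `u` to `c`, and of `v` to `a`. For each of the pairs
`(id, slide)`, `(slide, expand ∘ collapse)` and `(collapse ∘ expand, id)`, the supports of the two
images of any point together span a simplex, so straight-line homotopies connect them.
-/

noncomputable section

open Function

namespace AbsSimplicialComplex

lemma space.nonneg {V : Type*} {K : AbsSimplicialComplex V} (p : K.space) : 0 ≤ p.1 :=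
  p.2.1

variable {V : Type*} [Fintype V] (K : AbsSimplicialComplex V)

lemma space_prop_iff {f : V → ℝ} :
    ((∀ x, 0 ≤ f x) ∧ ∃ s ∈ K.faces, (∀ x, x ∉ s → f x = 0) ∧ ∑ x ∈ s, f x = 1) ↔
      0 ≤ f ∧ (∃ s ∈ K.faces, support f ⊆ s) ∧ ∑ x, f x = 1 := by
  have hsum {s : Finset V} (hs : support f ⊆ s) : ∑ x ∈ s, f x = ∑ x, f x :=
    Finset.sum_subset (Finset.subset_univ s) fun x _ hx => notMem_support.mp fun h => hx (hs h)
  constructor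
  · rintro ⟨h0, s, hs, hzero, h1⟩
    have hsupp : support f ⊆ s := fun x hx => by_contra fun h => hx (hzero x h)
    exact ⟨h0, ⟨s, hs, hsupp⟩, hsum hsupp ▸ h1⟩
  · rintro ⟨h0, ⟨s, hs, hsupp⟩, h1⟩
    exact ⟨h0, s, hs, fun x hx => notMem_support.mp fun h => hx (hsupp h), (hsum hsupp).trans h1⟩

def mkPoint (f : V → ℝ) (h0 : 0 ≤ f) (hf : ∃ s ∈ K.faces, support f ⊆ s)
    (h1 : ∑ x, f x = 1) : K.space :=
  ⟨f, K.space_prop_iff.mpr ⟨h0, hf, h1⟩⟩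

variable {K} in
lemma space.exists_face_support_subset (p : K.space) : ∃ s ∈ K.faces, support p.1 ⊆ s :=
  (K.space_prop_iff.mp p.2).2.1

variable {K} in
lemma space.sum_eq_one (p : K.space) : ∑ x, p.1 x = 1 :=
  (K.space_prop_iff.mp p.2).2.2

instance : CompactSpace K.space := by
  have hcover : IsCompact (⋃ s ∈ K.faces, stdSimplex ℝ V ∩ {f | support f ⊆ s}) := by
    refine (Set.toFinite K.faces).isCompact_biUnion fun s _ =>
      (isCompact_stdSimplex ℝ V).inter_right ?_
    have : {f : V → ℝ | support f ⊆ s} = ⋂ x ∈ (↑s : Set V)ᶜ, {f | f x = 0} := by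
      ext f
      simp only [Set.mem_ofPred_eq, Set.mem_iInter, support_subset_iff', Set.mem_compl_iff,
        Finset.mem_coe]
    rw [this]
    exact isClosed_biInter fun x _ => isClosed_eq (continuous_apply x) continuous_const
  have hset : {f : V → ℝ | (∀ x, 0 ≤ f x) ∧
      ∃ s ∈ K.faces, (∀ x, x ∉ s → f x = 0) ∧ ∑ x ∈ s, f x = 1} =
      ⋃ s ∈ K.faces, stdSimplex ℝ V ∩ {f | support f ⊆ s} := by
    ext f
    simp only [Set.mem_ofPred_eq, K.space_prop_iff, Set.mem_iUnion, Set.mem_inter_iff, stdSimplex,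
      exists_prop]
    exact ⟨fun ⟨h0, ⟨s, hs, hsupp⟩, h1⟩ => ⟨s, hs, ⟨h0, h1⟩, hsupp⟩,
      fun ⟨s, hs, ⟨h0, h1⟩, hsupp⟩ => ⟨h0, ⟨s, hs, hsupp⟩, h1⟩⟩
  rw [← hset] at hcover
  exact isCompact_iff_compactSpace.mp hcover

instance {V : Type*} (K : AbsSimplicialComplex V) : T2Space K.space :=
  inferInstanceAs (T2Space (Subtype _))

end AbsSimplicialComplex

lemma support_add_of_nonneg {α : Type*} {f g : α → ℝ} (hf : 0 ≤ f) (hg : 0 ≤ g) :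
    support (f + g) = support f ∪ support g := by
  ext x
  simp only [mem_support, Pi.add_apply, Set.mem_union, ne_eq,
    add_eq_zero_iff_of_nonneg (hf x) (hg x), not_and_or]

lemma support_add_subset_of_subset {α : Type*} {f g : α → ℝ} {s : Set α} (hf : support f ⊆ s)
    (hg : support g ⊆ s) : support (f + g) ⊆ s :=
  (support_add f g).trans (Set.union_subset hf hg)

theorem ContinuousMap.homotopic_of_contiguous {V X : Type*} [Fintype V] [TopologicalSpace X]
    {K : AbsSimplicialComplex V} {F G : C(X, K.space)}
    (h : ∀ x, ∃ s ∈ K.faces, support (F x).1 ∪ support (G x).1 ⊆ s) : F.Homotopic G := by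
  refine ⟨{
    toFun := fun tx => K.mkPoint ((1 - (tx.1 : ℝ)) • (F tx.2).1 + (tx.1 : ℝ) • (G tx.2).1) ?_ ?_ ?_
    continuous_toFun := ?_
    map_zero_left := fun x => Subtype.ext (by simp [AbsSimplicialComplex.mkPoint])
    map_one_left := fun x => Subtype.ext (by simp [AbsSimplicialComplex.mkPoint]) }⟩
  · exact add_nonneg (smul_nonneg (sub_nonneg.mpr tx.1.2.2) (F tx.2).nonneg)
      (smul_nonneg tx.1.2.1 (G tx.2).nonneg)
  · obtain ⟨s, hs, hsub⟩ := h tx.2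
    exact ⟨s, hs, ((support_add _ _).trans (Set.union_subset_union
      (support_smul_subset_right _ _) (support_smul_subset_right _ _))).trans hsub⟩
  · simp [Finset.sum_add_distrib, ← Finset.mul_sum, AbsSimplicialComplex.space.sum_eq_one]
  · refine (continuous_pi fun w => ?_).subtype_mk _
    have hF : Continuous fun x => (F x).1 w :=
      (continuous_apply w).comp (continuous_subtype_val.comp F.continuous)
    have hG : Continuous fun x => (G x).1 w :=
      (continuous_apply w).comp (continuous_subtype_val.comp G.continuous)
    simp only [Pi.add_apply, Pi.smul_apply, smul_eq_mul]
    fun_prop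

lemma SimpleGraph.isIndepSet_support_iff {V : Type*} {G : SimpleGraph V} {f : V → ℝ} :
    G.IsIndepSet (Function.support f) ↔ ∀ ⦃a b⦄, G.Adj a b → f a = 0 ∨ f b = 0 := by
  rw [SimpleGraph.isIndepSet_iff]
  refine ⟨fun h a b hab => ?_, fun h a ha b hb _ hab => (h hab).elim ha hb⟩
  by_contra! hne
  exact h hne.1 hne.2 hab.ne hab

section IndepComplex

variable {V W X : Type*} [Fintype V] [Fintype W] {G : SimpleGraph V} {H : SimpleGraph W}

lemma exists_indepComplex_face_iff {A : Set V} :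
    (∃ s ∈ (indepComplex G).faces, A ⊆ s) ↔ G.IsIndepSet A := by
  refine ⟨fun ⟨s, hs, hA⟩ a ha b hb _ => hs.2 a (hA ha) b (hA hb), fun hA => ?_⟩
  refine ⟨(Set.toFinite A).toFinset, ⟨Set.subset_univ _, fun a ha b hb hab => ?_⟩, by simp⟩
  rw [Set.Finite.mem_toFinset] at ha hb
  exact hA ha hb hab.ne hab

lemma isIndepSet_support (p : (indepComplex G).space) : G.IsIndepSet (support p.1) :=
  exists_indepComplex_face_iff.mp p.exists_face_support_subset

def indepPoint (f : V → ℝ) (h0 : 0 ≤ f) (hf : G.IsIndepSet (support f))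
    (h1 : ∑ x, f x = 1) : (indepComplex G).space :=
  (indepComplex G).mkPoint f h0 (exists_indepComplex_face_iff.mpr hf) h1

def indepMap (F : (V → ℝ) → W → ℝ) (hF : Continuous F) (hsum : ∀ f, ∑ w, F f w = ∑ x, f x)
    (h0 : ∀ p : (indepComplex G).space, 0 ≤ F p.1)
    (hI : ∀ p : (indepComplex G).space, H.IsIndepSet (support (F p.1))) :
    C((indepComplex G).space, (indepComplex H).space) where
  toFun p := indepPoint (F p.1) (h0 p) (hI p) ((hsum p.1).trans p.sum_eq_one)
  continuous_toFun := (hF.comp continuous_subtype_val).subtype_mk _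

@[simp] lemma indepMap_apply (F : (V → ℝ) → W → ℝ) (hF hsum h0 hI)
    (p : (indepComplex G).space) : (indepMap (H := H) F hF hsum h0 hI p).1 = F p.1 := rfl

theorem ContinuousMap.homotopic_of_isIndepSet_support_add [TopologicalSpace X]
    {F F' : C(X, (indepComplex G).space)} (h : ∀ x, G.IsIndepSet (support ((F x).1 + (F' x).1))) :
    F.Homotopic F' := by
  refine ContinuousMap.homotopic_of_contiguous fun x => exists_indepComplex_face_iff.mpr ?_
  rw [← support_add_of_nonneg (F x).nonneg (F' x).nonneg]
  exact h x

end IndepComplex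

section Graphs

variable {V W : Type*}

lemma isIndepSet_support_graphSum_iff {G : SimpleGraph V} {H : SimpleGraph W}
    {f : V ⊕ W → ℝ} :
    (graphSum G H).IsIndepSet (support f) ↔
      G.IsIndepSet (support (f ∘ Sum.inl)) ∧ H.IsIndepSet (support (f ∘ Sum.inr)) := by
  simp only [SimpleGraph.isIndepSet_support_iff]
  refine ⟨fun h => ⟨fun x y hxy => h (a := .inl x) (b := .inl y) hxy,
    fun x y hxy => h (a := .inr x) (b := .inr y) hxy⟩, ?_⟩
  rintro ⟨hG, hH⟩ (x | x) (y | y) hxy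
  exacts [hG hxy, hxy.elim, hxy.elim, hH hxy]

lemma isIndepSet_support_top_iff {g : Bool → ℝ} :
    (⊤ : SimpleGraph Bool).IsIndepSet (support g) ↔ g false = 0 ∨ g true = 0 := by
  simp only [SimpleGraph.isIndepSet_support_iff, SimpleGraph.top_adj]
  refine ⟨fun h => h Bool.false_ne_true, ?_⟩
  rintro h (_ | _) (_ | _) hne
  exacts [(hne rfl).elim, h, h.symm, (hne rfl).elim]

lemma isIndepSet_support_of_deleteEdges {G : SimpleGraph V} {u v : V} {g : V → ℝ}
    (hg : (G.deleteEdges {s(u, v)}).IsIndepSet (support g)) (huv : g u = 0 ∨ g v = 0) :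
    G.IsIndepSet (support g) := by
  rw [SimpleGraph.isIndepSet_support_iff] at hg ⊢
  intro x y hxy
  by_cases he : s(x, y) = s(u, v)
  · rcases Sym2.eq_iff.mp he with ⟨rfl, rfl⟩ | ⟨rfl, rfl⟩
    exacts [huv, huv.symm]
  · exact hg (SimpleGraph.deleteEdges_adj.mpr ⟨hxy, he⟩)

lemma isIndepSet_support_subdivide4_iff {G : SimpleGraph V} {u v : V} {f : V ⊕ Fin 3 → ℝ} :
    (subdivide4 G u v).IsIndepSet (support f) ↔
      (G.deleteEdges {s(u, v)}).IsIndepSet (support (f ∘ Sum.inl)) ∧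
      (f (.inl u) = 0 ∨ f (.inr 0) = 0) ∧ (f (.inr 0) = 0 ∨ f (.inr 1) = 0) ∧
      (f (.inr 1) = 0 ∨ f (.inr 2) = 0) ∧ (f (.inr 2) = 0 ∨ f (.inl v) = 0) := by
  have hV {x y : V} : (subdivide4 G u v).Adj (.inl x) (.inl y) ↔
      (G.deleteEdges {s(u, v)}).Adj x y := by
    simp only [subdivide4, sRel, SimpleGraph.deleteEdges_adj, Set.mem_singleton_iff,
      Sym2.eq_iff]
    constructor
    · rintro (h | h)
      · exact h
      · exact ⟨h.1.symm, by tauto⟩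
    · exact Or.inl
  simp only [SimpleGraph.isIndepSet_support_iff]
  constructor
  · intro h
    refine ⟨fun x y hxy => h (hV.mpr hxy), h ?_, h ?_, h ?_, h ?_⟩ <;> simp [subdivide4, sRel]
  · rintro ⟨hG, hua, hab, hbc, hcv⟩ (x | i) (y | j) hxy
    · exact hG (hV.mp hxy)
    · simp only [subdivide4, sRel] at hxy
      rcases hxy with (⟨rfl, rfl⟩ | ⟨rfl, rfl⟩) | hxy
      exacts [hua, hcv.symm, hxy.elim]
    · simp only [subdivide4, sRel] at hxy
      rcases hxy with hxy | (⟨rfl, rfl⟩ | ⟨rfl, rfl⟩)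
      exacts [hxy.elim, hua.symm, hcv]
    · simp only [subdivide4, sRel] at hxy
      fin_cases i <;> fin_cases j <;> simp at hxy
      exacts [hab, hab.symm, hbc, hbc.symm]

end Graphs

abbrev SuspModel {V : Type*} (G : SimpleGraph V) : Type _ :=
  (indepComplex (graphSum G (⊤ : SimpleGraph Bool))).space

section TwoPointRemoval

variable {V : Type*} [DecidableEq V] {g : V → ℝ} {u v : V} {cu cv : ℝ}

lemma sum_sub_single_sub_single [Fintype V] :
    ∑ x, (g - Pi.single u cu - Pi.single v cv : V → ℝ) x = ∑ x, g x - cu - cv := by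
  simp [Finset.sum_sub_distrib]

lemma sub_single_sub_single_nonneg (huv : u ≠ v) (hg : 0 ≤ g) (hu : cu ≤ g u) (hv : cv ≤ g v) :
    0 ≤ (g - Pi.single u cu - Pi.single v cv : V → ℝ) := by
  intro x
  by_cases hxu : x = u
  · subst hxu; simpa [huv] using hu
  by_cases hxv : x = v
  · subst hxv; simpa [hxu] using hv
  · simpa [hxu, hxv] using hg x

lemma support_sub_single_sub_single_subset (hcu : 0 ≤ cu) (hu : cu ≤ g u) (hcv : 0 ≤ cv)
    (hv : cv ≤ g v) : support (g - Pi.single u cu - Pi.single v cv : V → ℝ) ⊆ support g := by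
  refine support_subset_iff'.mpr fun x hx => ?_
  have hx : g x = 0 := notMem_support.mp hx
  have hsingle {w : V} {c : ℝ} (hc0 : 0 ≤ c) (hc : c ≤ g w) : (Pi.single w c : V → ℝ) x = 0 := by
    by_cases hxw : x = w
    · subst hxw
      simp [le_antisymm (hx ▸ hc) hc0]
    · simp [hxw]
  simp [hx, hsingle hcu hu, hsingle hcv hv]

@[fun_prop]
lemma Continuous.single_apply {X : Type*} [TopologicalSpace X] {c : X → ℝ} (hc : Continuous c)
    (u x : V) : Continuous fun y => (Pi.single u (c y) : V → ℝ) x :=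
  (continuous_apply x).comp ((continuous_single u).comp hc)

end TwoPointRemoval

namespace Subdivide4

variable {V : Type*} [DecidableEq V] {G : SimpleGraph V} {u v : V}

variable (u v) in
def collapseWeights (f : V ⊕ Fin 3 → ℝ) : V ⊕ Bool → ℝ :=
  Sum.elim (f ∘ Sum.inl - Pi.single u (min (f (.inl u)) (f (.inl v)))
      - Pi.single v (min (f (.inl u)) (f (.inl v))))
    fun ε => cond ε (f (.inr 0) + f (.inr 2)) (f (.inr 1) + 2 * min (f (.inl u)) (f (.inl v)))

/- With `τ` the weight of the pole `true` and `μᵤ = min (g u) τ`, `μᵥ = min (g v) τ` the weights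
taken from `u` and `v`, the vertex `a` gets `(τ - μᵤ + μᵥ) / 2 + μᵥ`: a share of `τ` that vanishes
as soon as `u` keeps some weight (then `g v = 0`, so `μᵤ = τ` and `μᵥ = 0`), plus the weight taken
from `v`. -/
variable (u v) in
def expandWeights (g : V ⊕ Bool → ℝ) : V ⊕ Fin 3 → ℝ :=
  Sum.elim (g ∘ Sum.inl - Pi.single u (min (g (.inl u)) (g (.inr true)))
      - Pi.single v (min (g (.inl v)) (g (.inr true))))
    ![(g (.inr true) - min (g (.inl u)) (g (.inr true)) + 3 * min (g (.inl v)) (g (.inr true))) / 2,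
      g (.inr false),
      (g (.inr true) - min (g (.inl v)) (g (.inr true)) + 3 * min (g (.inl u)) (g (.inr true))) / 2]

variable (u v) in
def slideWeights (f : V ⊕ Fin 3 → ℝ) : V ⊕ Fin 3 → ℝ :=
  Sum.elim (f ∘ Sum.inl - Pi.single u (min (f (.inl u)) (f (.inr 0) + f (.inr 2)))
      - Pi.single v (min (f (.inl v)) (f (.inr 0) + f (.inr 2))))
    ![f (.inr 0) + min (f (.inl v)) (f (.inr 0) + f (.inr 2)), f (.inr 1),
      f (.inr 2) + min (f (.inl u)) (f (.inr 0) + f (.inr 2))]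

lemma continuous_collapseWeights : Continuous (collapseWeights (V := V) u v) := by
  refine continuous_pi fun w => ?_
  rcases w with x | (_ | _) <;>
    simp only [collapseWeights, Sum.elim_inl, Sum.elim_inr, Pi.sub_apply, comp_apply, cond_false,
      cond_true] <;>
    fun_prop

lemma continuous_expandWeights : Continuous (expandWeights (V := V) u v) := by
  refine continuous_pi fun w => ?_
  rcases w with x | i
  · simp only [expandWeights, Sum.elim_inl, Pi.sub_apply, comp_apply]
    fun_prop
  · fin_cases i <;>
      simp only [expandWeights, Sum.elim_inr, Fin.zero_eta, Fin.mk_one, Fin.reduceFinMk,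
        Fin.isValue, Matrix.cons_val_zero, Matrix.cons_val_one, Matrix.cons_val] <;>
      fun_prop

lemma continuous_slideWeights : Continuous (slideWeights (V := V) u v) := by
  refine continuous_pi fun w => ?_
  rcases w with x | i
  · simp only [slideWeights, Sum.elim_inl, Pi.sub_apply, comp_apply]
    fun_prop
  · fin_cases i <;>
      simp only [slideWeights, Sum.elim_inr, Fin.zero_eta, Fin.mk_one, Fin.reduceFinMk, Fin.isValue,
        Matrix.cons_val_zero, Matrix.cons_val_one, Matrix.cons_val] <;>
      fun_prop

lemma sum_collapseWeights [Fintype V] (f : V ⊕ Fin 3 → ℝ) :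
    ∑ w, collapseWeights u v f w = ∑ w, f w := by
  simp only [collapseWeights, Fintype.sum_sum_type, Sum.elim_inl, Sum.elim_inr,
    sum_sub_single_sub_single, comp_apply, Fintype.sum_bool, cond_true, cond_false,
    Fin.sum_univ_three]
  ring

lemma sum_expandWeights [Fintype V] (g : V ⊕ Bool → ℝ) :
    ∑ w, expandWeights u v g w = ∑ w, g w := by
  simp only [expandWeights, Fintype.sum_sum_type, Sum.elim_inl, Sum.elim_inr,
    sum_sub_single_sub_single, comp_apply, Fintype.sum_bool, Fin.sum_univ_three, Fin.isValue,
    Matrix.cons_val_zero, Matrix.cons_val_one, Matrix.cons_val]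
  ring

lemma sum_slideWeights [Fintype V] (f : V ⊕ Fin 3 → ℝ) :
    ∑ w, slideWeights u v f w = ∑ w, f w := by
  simp only [slideWeights, Fintype.sum_sum_type, Sum.elim_inl, Sum.elim_inr,
    sum_sub_single_sub_single, comp_apply, Fin.sum_univ_three, Fin.isValue, Matrix.cons_val_zero,
    Matrix.cons_val_one, Matrix.cons_val]
  ring

lemma collapseWeights_nonneg (huv : u ≠ v) {f : V ⊕ Fin 3 → ℝ} (hf : 0 ≤ f) :
    0 ≤ collapseWeights u v f := by
  rintro (x | (_ | _))
  · exact sub_single_sub_single_nonneg huv (fun x => hf (.inl x)) (min_le_left _ _)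
      (min_le_right _ _) x
  · exact add_nonneg (hf _) (mul_nonneg zero_le_two (le_min (hf _) (hf _)))
  · exact add_nonneg (hf _) (hf _)

lemma expandWeights_nonneg (huv : u ≠ v) {g : V ⊕ Bool → ℝ} (hg : 0 ≤ g) :
    0 ≤ expandWeights u v g := by
  have hg' : ∀ w, 0 ≤ g w := hg
  rintro (x | i)
  · exact sub_single_sub_single_nonneg huv (fun x => hg (.inl x)) (min_le_left _ _)
      (min_le_left _ _) x
  · fin_cases i <;>
      simp only [expandWeights, Pi.zero_apply, Sum.elim_inr, Fin.zero_eta, Fin.mk_one,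
        Fin.reduceFinMk, Fin.isValue, Matrix.cons_val_zero, Matrix.cons_val_one,
        Matrix.cons_val] <;>
      grind

lemma slideWeights_nonneg (huv : u ≠ v) {f : V ⊕ Fin 3 → ℝ} (hf : 0 ≤ f) :
    0 ≤ slideWeights u v f := by
  have hf' : ∀ w, 0 ≤ f w := hf
  rintro (x | i)
  · exact sub_single_sub_single_nonneg huv (fun x => hf (.inl x)) (min_le_left _ _)
      (min_le_left _ _) x
  · fin_cases i <;>
      simp only [slideWeights, Pi.zero_apply, Sum.elim_inr, Fin.zero_eta, Fin.mk_one,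
        Fin.reduceFinMk, Fin.isValue, Matrix.cons_val_zero, Matrix.cons_val_one,
        Matrix.cons_val] <;>
      grind

lemma support_collapseWeights_inl_subset {f : V ⊕ Fin 3 → ℝ} (hf : 0 ≤ f) :
    support (collapseWeights u v f ∘ Sum.inl) ⊆ support (f ∘ Sum.inl) :=
  support_sub_single_sub_single_subset (le_min (hf _) (hf _)) (min_le_left _ _)
    (le_min (hf _) (hf _)) (min_le_right _ _)

lemma support_expandWeights_inl_subset {g : V ⊕ Bool → ℝ} (hg : 0 ≤ g) :
    support (expandWeights u v g ∘ Sum.inl) ⊆ support (g ∘ Sum.inl) :=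
  support_sub_single_sub_single_subset (le_min (hg _) (hg _)) (min_le_left _ _)
    (le_min (hg _) (hg _)) (min_le_left _ _)

lemma support_slideWeights_inl_subset {f : V ⊕ Fin 3 → ℝ} (hf : 0 ≤ f) :
    support (slideWeights u v f ∘ Sum.inl) ⊆ support (f ∘ Sum.inl) :=
  support_sub_single_sub_single_subset (le_min (hf _) (add_nonneg (hf _) (hf _)))
    (min_le_left _ _) (le_min (hf _) (add_nonneg (hf _) (hf _))) (min_le_left _ _)

lemma isIndepSet_support_collapseWeights (h : G.Adj u v) {f : V ⊕ Fin 3 → ℝ} (hf0 : 0 ≤ f)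
    (hf : (subdivide4 G u v).IsIndepSet (support f)) :
    (graphSum G (⊤ : SimpleGraph Bool)).IsIndepSet (support (collapseWeights u v f)) := by
  obtain ⟨hV, hua, hab, hbc, hcv⟩ := isIndepSet_support_subdivide4_iff.mp hf
  have hf0' : ∀ w, 0 ≤ f w := hf0
  rw [isIndepSet_support_graphSum_iff, isIndepSet_support_top_iff]
  refine ⟨isIndepSet_support_of_deleteEdges
    (Set.Pairwise.mono (support_collapseWeights_inl_subset hf0) hV) ?_, ?_⟩
  · simp only [collapseWeights, Sum.elim_inl, comp_apply, Pi.sub_apply, Pi.single_eq_same,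
      Pi.single_eq_of_ne h.ne, Pi.single_eq_of_ne h.ne.symm, sub_zero]
    grind
  · simp only [collapseWeights]
    grind

lemma isIndepSet_support_expandWeights (h : G.Adj u v) {g : V ⊕ Bool → ℝ} (hg0 : 0 ≤ g)
    (hg : (graphSum G (⊤ : SimpleGraph Bool)).IsIndepSet (support g)) :
    (subdivide4 G u v).IsIndepSet (support (expandWeights u v g)) := by
  obtain ⟨hV, hpoles⟩ := isIndepSet_support_graphSum_iff.mp hg
  have huv := SimpleGraph.isIndepSet_support_iff.mp hV h
  rw [isIndepSet_support_top_iff] at hpoles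
  have hg0' : ∀ w, 0 ≤ g w := hg0
  rw [isIndepSet_support_subdivide4_iff]
  refine ⟨Set.Pairwise.mono (support_expandWeights_inl_subset hg0) ?_, ?_, ?_, ?_, ?_⟩
  · exact Set.Pairwise.mono' (fun x y hxy hadj => hxy (SimpleGraph.deleteEdges_le _ hadj)) hV
  all_goals
    simp only [expandWeights, Sum.elim_inl, Sum.elim_inr, comp_apply, Pi.sub_apply,
      Pi.single_eq_same, Pi.single_eq_of_ne h.ne, Pi.single_eq_of_ne h.ne.symm, sub_zero,
      Matrix.cons_val_zero, Matrix.cons_val_one, Matrix.cons_val]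
    grind

lemma isIndepSet_support_slideWeights (h : G.Adj u v) {f : V ⊕ Fin 3 → ℝ} (hf0 : 0 ≤ f)
    (hf : (subdivide4 G u v).IsIndepSet (support f)) :
    (subdivide4 G u v).IsIndepSet (support (slideWeights u v f)) := by
  obtain ⟨hV, hua, hab, hbc, hcv⟩ := isIndepSet_support_subdivide4_iff.mp hf
  have hf0' : ∀ w, 0 ≤ f w := hf0
  rw [isIndepSet_support_subdivide4_iff]
  refine ⟨Set.Pairwise.mono (support_slideWeights_inl_subset hf0) hV, ?_, ?_, ?_, ?_⟩
  all_goals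
    simp only [slideWeights, Sum.elim_inl, Sum.elim_inr, comp_apply, Pi.sub_apply,
      Pi.single_eq_same, Pi.single_eq_of_ne h.ne, Pi.single_eq_of_ne h.ne.symm, sub_zero,
      Matrix.cons_val_zero, Matrix.cons_val_one, Matrix.cons_val]
    grind

variable [Fintype V]

def collapse (h : G.Adj u v) : C((indepComplex (subdivide4 G u v)).space, SuspModel G) :=
  indepMap (collapseWeights u v) continuous_collapseWeights sum_collapseWeights
    (fun p => collapseWeights_nonneg h.ne p.nonneg)
    (fun p => isIndepSet_support_collapseWeights h p.nonneg (isIndepSet_support p))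

def expand (h : G.Adj u v) : C(SuspModel G, (indepComplex (subdivide4 G u v)).space) :=
  indepMap (expandWeights u v) continuous_expandWeights sum_expandWeights
    (fun p => expandWeights_nonneg h.ne p.nonneg)
    (fun p => isIndepSet_support_expandWeights h p.nonneg (isIndepSet_support p))

def slide (h : G.Adj u v) :
    C((indepComplex (subdivide4 G u v)).space, (indepComplex (subdivide4 G u v)).space) :=
  indepMap (slideWeights u v) continuous_slideWeights sum_slideWeights
    (fun p => slideWeights_nonneg h.ne p.nonneg)
    (fun p => isIndepSet_support_slideWeights h p.nonneg (isIndepSet_support p))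

lemma id_homotopic_slide (h : G.Adj u v) : (ContinuousMap.id _).Homotopic (slide h) := by
  refine ContinuousMap.homotopic_of_isIndepSet_support_add fun p => ?_
  obtain ⟨hV, hua, hab, hbc, hcv⟩ :=
    isIndepSet_support_subdivide4_iff.mp (isIndepSet_support p)
  have hp : ∀ w, 0 ≤ p.1 w := p.nonneg
  rw [isIndepSet_support_subdivide4_iff]
  refine ⟨Set.Pairwise.mono (support_add_subset_of_subset subset_rfl
    (support_slideWeights_inl_subset p.nonneg)) hV, ?_, ?_, ?_, ?_⟩
  all_goals
    simp only [slide, indepMap_apply, ContinuousMap.id_apply, Pi.add_apply, slideWeights,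
      Sum.elim_inl, Sum.elim_inr, comp_apply, Pi.sub_apply, Pi.single_eq_same,
      Pi.single_eq_of_ne h.ne, Pi.single_eq_of_ne h.ne.symm, sub_zero, Matrix.cons_val_zero,
      Matrix.cons_val_one, Matrix.cons_val]
    grind

lemma slide_homotopic_expand_comp_collapse (h : G.Adj u v) :
    (slide h).Homotopic ((expand h).comp (collapse h)) := by
  refine ContinuousMap.homotopic_of_isIndepSet_support_add fun p => ?_
  obtain ⟨hV, hua, hab, hbc, hcv⟩ :=
    isIndepSet_support_subdivide4_iff.mp (isIndepSet_support p)
  have hp : ∀ w, 0 ≤ p.1 w := p.nonneg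
  have hsupp : support ((expand h (collapse h p)).1 ∘ Sum.inl) ⊆ support (p.1 ∘ Sum.inl) :=
    (support_expandWeights_inl_subset (collapse h p).nonneg).trans
      (support_collapseWeights_inl_subset p.nonneg)
  rw [isIndepSet_support_subdivide4_iff]
  refine ⟨Set.Pairwise.mono (support_add_subset_of_subset
    (support_slideWeights_inl_subset p.nonneg) hsupp) hV, ?_, ?_, ?_, ?_⟩
  all_goals
    simp only [slide, expand, collapse, indepMap_apply, ContinuousMap.comp_apply, Pi.add_apply,
      slideWeights, expandWeights, collapseWeights, Sum.elim_comp_inl, Sum.elim_inl, Sum.elim_inr,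
      comp_apply, Pi.sub_apply, Pi.single_eq_same, Pi.single_eq_of_ne h.ne,
      Pi.single_eq_of_ne h.ne.symm, sub_zero, cond_true, cond_false, Matrix.cons_val_zero,
      Matrix.cons_val_one, Matrix.cons_val]
    grind

lemma collapse_comp_expand_homotopic_id (h : G.Adj u v) :
    ((collapse h).comp (expand h)).Homotopic (ContinuousMap.id _) := by
  refine ContinuousMap.homotopic_of_isIndepSet_support_add fun p => ?_
  obtain ⟨hV, hpoles⟩ := isIndepSet_support_graphSum_iff.mp (isIndepSet_support p)
  have huv := SimpleGraph.isIndepSet_support_iff.mp hV h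
  rw [isIndepSet_support_top_iff] at hpoles
  have hp : ∀ w, 0 ≤ p.1 w := p.nonneg
  have hsupp : support ((collapse h (expand h p)).1 ∘ Sum.inl) ⊆ support (p.1 ∘ Sum.inl) :=
    (support_collapseWeights_inl_subset (expand h p).nonneg).trans
      (support_expandWeights_inl_subset p.nonneg)
  rw [isIndepSet_support_graphSum_iff, isIndepSet_support_top_iff]
  refine ⟨Set.Pairwise.mono (support_add_subset_of_subset hsupp subset_rfl) hV, ?_⟩
  simp only [expand, collapse, indepMap_apply, ContinuousMap.comp_apply, ContinuousMap.id_apply,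
    Pi.add_apply, expandWeights, collapseWeights, Sum.elim_comp_inl, Sum.elim_inl, Sum.elim_inr,
    comp_apply, Pi.sub_apply, Pi.single_eq_same, Pi.single_eq_of_ne h.ne,
    Pi.single_eq_of_ne h.ne.symm, sub_zero, cond_true, cond_false, Matrix.cons_val_zero,
    Matrix.cons_val_one, Matrix.cons_val]
  grind

def homotopyEquiv (h : G.Adj u v) :
    ContinuousMap.HomotopyEquiv (indepComplex (subdivide4 G u v)).space (SuspModel G) where
  toFun := collapse h
  invFun := expand h
  left_inv := ((id_homotopic_slide h).trans (slide_homotopic_expand_comp_collapse h)).symm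
  right_inv := collapse_comp_expand_homotopic_id h

end Subdivide4

namespace SuspModel

variable {V : Type*} {G : SimpleGraph V}

def joinWeights (y : V → ℝ) (ε : Bool) (t : ℝ) : V ⊕ Bool → ℝ :=
  Sum.elim ((1 - t) • y) (Pi.single ε t)

lemma joinWeights_nonneg {y : V → ℝ} (hy : 0 ≤ y) (ε : Bool) {t : ℝ} (ht0 : 0 ≤ t)
    (ht1 : t ≤ 1) : 0 ≤ joinWeights y ε t := by
  rintro (x | b)
  · exact mul_nonneg (sub_nonneg.mpr ht1) (hy x)
  · by_cases hb : b = ε <;> simp [joinWeights, hb, ht0]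

variable [Fintype V]

lemma sum_joinWeights (y : V → ℝ) (ε : Bool) (t : ℝ) :
    ∑ w, joinWeights y ε t w = (1 - t) * ∑ x, y x + t := by
  simp [joinWeights, Fintype.sum_sum_type, Finset.mul_sum]

def joinPoint (y : V → ℝ) (hy0 : 0 ≤ y) (hy : G.IsIndepSet (support y)) (ε : Bool) (t : I)
    (h1 : (1 - t) * ∑ x, y x + t = 1) : SuspModel G :=
  indepPoint (joinWeights y ε t) (joinWeights_nonneg hy0 ε t.2.1 t.2.2)
    (isIndepSet_support_graphSum_iff.mpr ⟨Set.Pairwise.mono (support_smul_subset_right _ _) hy,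
      isIndepSet_support_top_iff.mpr (by cases ε <;> simp [joinWeights])⟩)
    ((sum_joinWeights y ε t).trans h1)

def point (y : (indepComplex G).space) (ε : Bool) (t : I) : SuspModel G :=
  joinPoint y.1 y.nonneg (isIndepSet_support y) ε t (by rw [y.sum_eq_one]; ring)

def apex (ε : Bool) : SuspModel G :=
  joinPoint 0 le_rfl (by simp [SimpleGraph.IsIndepSet]) ε 1 (by simp)

@[simp] lemma point_coe (y : (indepComplex G).space) (ε : Bool) (t : I) :
    (point y ε t).1 = joinWeights y.1 ε t := rfl

@[simp] lemma apex_coe (ε : Bool) : (apex (G := G) ε).1 = joinWeights 0 ε 1 := rfl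

lemma continuous_point :
    Continuous fun q : (indepComplex G).space × Bool × I => point q.1 q.2.1 q.2.2 := by
  refine (continuous_pi fun w => ?_).subtype_mk _
  rcases w with x | b
  · simp only [joinWeights, Sum.elim_inl, Pi.smul_apply, smul_eq_mul]
    have : Continuous fun q : (indepComplex G).space × Bool × I => q.1.1 x :=
      (continuous_apply x).comp (continuous_subtype_val.comp continuous_fst)
    fun_prop
  · have hsingle (ε : Bool) (t : ℝ) :
        (Pi.single ε t : Bool → ℝ) b = (Pi.single ε 1 : Bool → ℝ) b * t := by
      by_cases hb : b = ε <;> simp [hb]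
    have : Continuous fun q : (indepComplex G).space × Bool × I =>
        (Pi.single q.2.1 1 : Bool → ℝ) b :=
      (continuous_of_discreteTopology (f := fun ε : Bool => (Pi.single ε 1 : Bool → ℝ) b)).comp
        (continuous_fst.comp continuous_snd)
    exact (this.mul (by fun_prop)).congr fun q => (hsingle _ _).symm

variable (G) in
def ofTopJoinAux :
    (indepComplex G).space × Bool × I ⊕ ((indepComplex G).space ⊕ Bool) → SuspModel G :=
  Sum.elim (fun q => point q.1 q.2.1 q.2.2) (Sum.elim (fun y => point y false 0) apex)

lemma ofTopJoinAux_eq_of_joinRel {a b} (hab : JoinRel (indepComplex G).space Bool a b) :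
    ofTopJoinAux G a = ofTopJoinAux G b := by
  rcases hab with ⟨y, ε⟩ | ⟨y, ε⟩ <;> refine Subtype.ext ?_
  · show joinWeights y.1 ε 0 = joinWeights y.1 false 0
    simp [joinWeights]
  · show joinWeights y.1 ε 1 = joinWeights 0 ε 1
    simp [joinWeights]

variable (G) in
def ofTopJoin : C(TopJoin (indepComplex G).space Bool, SuspModel G) where
  toFun := Quot.lift (ofTopJoinAux G) fun _ _ => ofTopJoinAux_eq_of_joinRel
  continuous_toFun := continuous_quot_lift _ <| continuous_point.sumElim <|
    (continuous_point.comp (continuous_id.prodMk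
      (continuous_const (y := ((false, 0) : Bool × I))))).sumElim continuous_of_discreteTopology

def height (z : SuspModel G) : ℝ := z.1 (.inr false) + z.1 (.inr true)

def pole (z : SuspModel G) : Bool := decide (z.1 (.inr true) ≠ 0)

lemma sum_inl_eq_one_sub_height (z : SuspModel G) : ∑ x, z.1 (.inl x) = 1 - height z := by
  have := z.sum_eq_one
  rw [Fintype.sum_sum_type, Fintype.sum_bool] at this
  rw [height]
  linarith

lemma height_mem_unitInterval (z : SuspModel G) : height z ∈ I := by
  have h0 : 0 ≤ ∑ x, z.1 (.inl x) := Finset.sum_nonneg fun x _ => z.nonneg _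
  rw [sum_inl_eq_one_sub_height] at h0
  exact ⟨add_nonneg (z.nonneg _) (z.nonneg _), by linarith⟩

lemma comp_inr_eq_single (z : SuspModel G) :
    z.1 ∘ Sum.inr = Pi.single (pole z) (height z) := by
  have hpoles := isIndepSet_support_top_iff.mp
    (isIndepSet_support_graphSum_iff.mp (isIndepSet_support z)).2
  funext b
  by_cases hT : z.1 (.inr true) = 0 <;> cases b <;> simp_all [pole, height]

def equator (z : SuspModel G) (h : height z ≠ 1) : (indepComplex G).space :=
  indepPoint ((1 - height z)⁻¹ • (z.1 ∘ Sum.inl)) (smul_nonneg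
      (inv_nonneg.mpr (sub_nonneg.mpr (height_mem_unitInterval z).2)) fun x => z.nonneg _)
    (Set.Pairwise.mono (support_smul_subset_right _ _)
      (isIndepSet_support_graphSum_iff.mp (isIndepSet_support z)).1)
    (by
      simp only [Pi.smul_apply, comp_apply, smul_eq_mul, ← Finset.mul_sum,
        sum_inl_eq_one_sub_height]
      exact inv_mul_cancel₀ (sub_ne_zero.mpr (Ne.symm h)))

variable (G) in
def toTopJoin (z : SuspModel G) : TopJoin (indepComplex G).space Bool :=
  if h : height z = 1 then (Quot.mk _ (.inr (.inr (pole z))) : TopJoin _ _)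
  else Quot.mk _ (.inl (equator z h, pole z, ⟨height z, height_mem_unitInterval z⟩))

lemma toTopJoin_of_height_eq_one {z : SuspModel G} (h : height z = 1) :
    toTopJoin G z = Quot.mk _ (.inr (.inr (pole z))) :=
  dif_pos h

lemma toTopJoin_of_height_ne_one {z : SuspModel G} (h : height z ≠ 1) :
    toTopJoin G z = Quot.mk _ (.inl (equator z h, pole z, ⟨height z, height_mem_unitInterval z⟩)) :=
  dif_neg h

lemma ofTopJoin_toTopJoin (z : SuspModel G) : ofTopJoin G (toTopJoin G z) = z := by
  refine Subtype.ext ?_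
  conv_rhs => rw [← Sum.elim_comp_inl_inr z.1, comp_inr_eq_single]
  by_cases h : height z = 1
  · have hV : z.1 ∘ Sum.inl = 0 := by
      funext x
      refine (Finset.sum_eq_zero_iff_of_nonneg fun x _ => z.nonneg (.inl x)).mp ?_ x
        (Finset.mem_univ x)
      rw [sum_inl_eq_one_sub_height, h, sub_self]
    rw [toTopJoin_of_height_eq_one h]
    show joinWeights 0 (pole z) 1 = _
    simp [joinWeights, hV, h]
  · rw [toTopJoin_of_height_ne_one h]
    show joinWeights ((1 - height z)⁻¹ • (z.1 ∘ Sum.inl)) (pole z) (height z) = _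
    simp [joinWeights, smul_smul, mul_inv_cancel₀ (sub_ne_zero.mpr (Ne.symm h))]

lemma toTopJoin_point (y : (indepComplex G).space) (ε : Bool) (t : I) :
    toTopJoin G (point y ε t) = Quot.mk _ (.inl (y, ε, t)) := by
  have hheight : height (point y ε t) = t := by
    cases ε <;> simp [height, joinWeights]
  have hpole (ht : (t : ℝ) ≠ 0) : pole (point y ε t) = ε := by
    cases ε <;> simp [pole, joinWeights, ht]
  by_cases h1 : (t : ℝ) = 1
  · have ht : t = 1 := Subtype.ext h1
    rw [toTopJoin_of_height_eq_one (hheight.trans h1), hpole (by simp [h1]), ht]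
    exact (Quot.sound (JoinRel.one y ε)).symm
  · rw [toTopJoin_of_height_ne_one (hheight ▸ h1)]
    have hy : equator (point y ε t) (hheight ▸ h1) = y := by
      refine Subtype.ext (funext fun x => ?_)
      simp [equator, indepPoint, AbsSimplicialComplex.mkPoint, hheight, joinWeights, ← mul_assoc,
        inv_mul_cancel₀ (sub_ne_zero.mpr (Ne.symm h1))]
    have ht : (⟨height (point y ε t), height_mem_unitInterval _⟩ : I) = t :=
      Subtype.ext hheight
    rw [hy, ht]
    by_cases h0 : (t : ℝ) = 0
    · have ht0 : t = 0 := Subtype.ext h0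
      rw [ht0]
      exact (Quot.sound (JoinRel.zero y _)).trans (Quot.sound (JoinRel.zero y ε)).symm
    · rw [hpole h0]

lemma toTopJoin_ofTopJoin (q : TopJoin (indepComplex G).space Bool) :
    toTopJoin G (ofTopJoin G q) = q := by
  induction q using Quot.ind with
  | mk a =>
    rcases a with ⟨y, ε, t⟩ | y | ε
    · exact toTopJoin_point y ε t
    · exact (toTopJoin_point y false 0).trans (Quot.sound (JoinRel.zero y false))
    · have hheight : height (apex (G := G) ε) = 1 := by
        cases ε <;> simp [height, joinWeights]
      have hpole : pole (apex (G := G) ε) = ε := by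
        cases ε <;> simp [pole, joinWeights]
      exact (toTopJoin_of_height_eq_one hheight).trans (by rw [hpole])

instance (X Y : Type*) [TopologicalSpace X] [TopologicalSpace Y] [CompactSpace X]
    [CompactSpace Y] : CompactSpace (TopJoin X Y) :=
  Quot.compactSpace

variable (G) in
def homeomorphTopJoin : TopJoin (indepComplex G).space Bool ≃ₜ SuspModel G :=
  (ofTopJoin G).continuous.homeoOfEquivCompactToT2
    (f := ⟨ofTopJoin G, toTopJoin G, toTopJoin_ofTopJoin, ofTopJoin_toTopJoin⟩)

end SuspModel

end

/-- Csorba: subdividing an edge `uv` of `H` into a path of four edges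
yields a graph `G` with `I_G ≃ Σ I_H`. -/
theorem csorba_subdivision {V : Type} [Fintype V] [DecidableEq V]
    (G : SimpleGraph V) (u v : V) (h : G.Adj u v) :
    Nonempty (ContinuousMap.HomotopyEquiv
      (indepComplex (subdivide4 G u v)).space
      (Susp (indepComplex G).space)) :=
  ⟨(Subdivide4.homotopyEquiv h).trans (SuspModel.homeomorphTopJoin G).symm.toHomotopyEquiv⟩
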